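/- Let n ≥ 1, γ ∈ ℝ, let ρ, μ : ℝⁿ → ℝ be smooth with ρ(x) > 0 and μ(x) > 0 for all x, and let Φ : ℝⁿ → ℝ be smooth with compact support. Then ∫_{ℝⁿ} ( γ·μ(x)^{γ−2}·⟨∇μ(x), ∇Φ(x)⟩ + μ(x)^{γ−1}·ΔΦ(x) )·ρ(x) dx = ∫_{ℝⁿ} Φ(x)·∇·( μ^γ ∇(ρ/μ) )(x) dx. -/

import Mathlib

open MeasureTheory Filter Set
open scoped InnerProductSpace Topology

/-- Partial derivative `∂ⱼ f x` on Euclidean space. -/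
noncomputable def pder (n : ℕ) (j : Fin n) (f : EuclideanSpace ℝ (Fin n) → ℝ)
    (x : EuclideanSpace ℝ (Fin n)) : ℝ :=
  fderiv ℝ f x (EuclideanSpace.single j 1)

/-- Divergence `∇·v` of a vector field on Euclidean space. -/
noncomputable def divg (n : ℕ) (v : EuclideanSpace ℝ (Fin n) → EuclideanSpace ℝ (Fin n))
    (x : EuclideanSpace ℝ (Fin n)) : ℝ :=
  ∑ j, pder n j (fun y => v y j) x

/-- Laplacian `Δf = ∑ⱼ ∂ⱼ∂ⱼ f`. -/
noncomputable def lapl (n : ℕ) (f : EuclideanSpace ℝ (Fin n) → ℝ)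
    (x : EuclideanSpace ℝ (Fin n)) : ℝ :=
  ∑ j, pder n j (fun y => pder n j f y) x

/-- Entry `(i,j)` of the Hessian matrix of `f`. -/
noncomputable def hessij (n : ℕ) (f : EuclideanSpace ℝ (Fin n) → ℝ)
    (x : EuclideanSpace ℝ (Fin n)) (i j : Fin n) : ℝ :=
  pder n i (fun y => pder n j f y) x

/-- Hessian quadratic form `Hess f (u,u) = ∑ᵢⱼ (∂ᵢ∂ⱼf) uᵢ uⱼ`. -/
noncomputable def hessQF (n : ℕ) (f : EuclideanSpace ℝ (Fin n) → ℝ)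
    (x u : EuclideanSpace ℝ (Fin n)) : ℝ :=
  ∑ i, ∑ j, hessij n f x i j * u i * u j

/-- Squared Frobenius norm of the Hessian: `‖Hess f‖² = ∑ᵢⱼ (∂ᵢ∂ⱼf)²`. -/
noncomputable def hessFrob (n : ℕ) (f : EuclideanSpace ℝ (Fin n) → ℝ)
    (x : EuclideanSpace ℝ (Fin n)) : ℝ :=
  ∑ i, ∑ j, (hessij n f x i j)^2

/-! Since `L_γΦ = μ⁻¹ ∇·(μ^γ ∇Φ)`, one integration by parts on each side turns both integrals
into `-∫ μ^γ ⟨∇Φ, ∇(ρ/μ)⟩ dx`; no boundary terms appear because `Φ` has compact support. -/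

section EuclideanCalculus

variable {n : ℕ}

theorem gradient_apply_eq_pder (f : EuclideanSpace ℝ (Fin n) → ℝ)
    (x : EuclideanSpace ℝ (Fin n)) (j : Fin n) : gradient f x j = pder n j f x := by
  rw [pder, ← inner_gradient_left, EuclideanSpace.inner_single_right]
  simp

theorem inner_gradient_eq_sum_pder_mul (f : EuclideanSpace ℝ (Fin n) → ℝ)
    (x v : EuclideanSpace ℝ (Fin n)) : ⟪gradient f x, v⟫_ℝ = ∑ j, pder n j f x * v j := by
  simp only [PiLp.inner_apply, gradient_apply_eq_pder, RCLike.inner_apply, conj_trivial, mul_comm]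

theorem contDiff_pder {k : WithTop ℕ∞} {f : EuclideanSpace ℝ (Fin n) → ℝ}
    (hf : ContDiff ℝ (k + 1) f) (j : Fin n) : ContDiff ℝ k (pder n j f) :=
  (hf.fderiv_right le_rfl).clm_apply contDiff_const

theorem continuous_pder {f : EuclideanSpace ℝ (Fin n) → ℝ} (hf : ContDiff ℝ 1 f) (j : Fin n) :
    Continuous (pder n j f) :=
  (contDiff_pder (k := 0) (by simpa using hf) j).continuous

theorem contDiff_gradient {k : WithTop ℕ∞} {f : EuclideanSpace ℝ (Fin n) → ℝ}
    (hf : ContDiff ℝ (k + 1) f) : ContDiff ℝ k (gradient f) :=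
  (contDiff_piLp 2).2 fun j => by simpa only [gradient_apply_eq_pder] using contDiff_pder hf j

theorem HasCompactSupport.pder {f : EuclideanSpace ℝ (Fin n) → ℝ} (hf : HasCompactSupport f)
    (j : Fin n) : HasCompactSupport (pder n j f) :=
  hf.fderiv_apply (𝕜 := ℝ) _

theorem HasCompactSupport.gradient {f : EuclideanSpace ℝ (Fin n) → ℝ}
    (hf : HasCompactSupport f) : HasCompactSupport (gradient f) :=
  (hf.fderiv (𝕜 := ℝ)).comp_left (map_zero (InnerProductSpace.toDual ℝ _).symm)

theorem pder_mul {f g : EuclideanSpace ℝ (Fin n) → ℝ} {x : EuclideanSpace ℝ (Fin n)}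
    (hf : DifferentiableAt ℝ f x) (hg : DifferentiableAt ℝ g x) (j : Fin n) :
    pder n j (fun y => f y * g y) x = pder n j f x * g x + f x * pder n j g x := by
  simp only [pder, fderiv_fun_mul hf hg, add_apply, smul_apply, smul_eq_mul]
  ring

theorem gradient_rpow_const {f : EuclideanSpace ℝ (Fin n) → ℝ} {x : EuclideanSpace ℝ (Fin n)}
    (hf : DifferentiableAt ℝ f x) (hx : f x ≠ 0) (p : ℝ) :
    gradient (fun y => f y ^ p) x = (p * f x ^ (p - 1)) • gradient f x := by
  refine HasGradientAt.gradient (hasGradientAt_iff_hasFDerivAt.2 ?_)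
  simpa [← toDual_gradient] using hf.hasFDerivAt.rpow_const (p := p) (Or.inl hx)

theorem divg_smul {f : EuclideanSpace ℝ (Fin n) → ℝ}
    {v : EuclideanSpace ℝ (Fin n) → EuclideanSpace ℝ (Fin n)} {x : EuclideanSpace ℝ (Fin n)}
    (hf : DifferentiableAt ℝ f x) (hv : DifferentiableAt ℝ v x) :
    divg n (fun y => f y • v y) x = ⟪gradient f x, v x⟫_ℝ + f x * divg n v x := by
  have hvj (j : Fin n) : DifferentiableAt ℝ (fun y => v y j) x :=
    (differentiableAt_piLp 2).1 hv j
  simp only [divg, PiLp.smul_apply, smul_eq_mul, pder_mul hf (hvj _), Finset.sum_add_distrib,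
    inner_gradient_eq_sum_pder_mul, Finset.mul_sum]

theorem divg_gradient (f : EuclideanSpace ℝ (Fin n) → ℝ) : divg n (gradient f) = lapl n f := by
  ext x
  simp only [divg, lapl, gradient_apply_eq_pder]

theorem integrable_mul_of_hasCompactSupport {X : Type*} [TopologicalSpace X] [MeasurableSpace X]
    [OpensMeasurableSpace X] {μ : Measure X} [IsFiniteMeasureOnCompacts μ] {f g : X → ℝ}
    (hf : Continuous f) (hg : Continuous g) (hc : HasCompactSupport f ∨ HasCompactSupport g) :
    Integrable (fun x => f x * g x) μ :=
  (hf.mul hg).integrable_of_hasCompactSupport (hc.elim (·.mul_right) (·.mul_left))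

theorem integral_mul_pder_eq_neg {u w : EuclideanSpace ℝ (Fin n) → ℝ} (hu : ContDiff ℝ 1 u)
    (hw : ContDiff ℝ 1 w) (hc : HasCompactSupport u ∨ HasCompactSupport w) (j : Fin n) :
    ∫ x, u x * pder n j w x = -∫ x, pder n j u x * w x :=
  integral_mul_fderiv_eq_neg_fderiv_mul_of_integrable
    (integrable_mul_of_hasCompactSupport (continuous_pder hu j) hw.continuous
      (hc.imp (·.pder j) id))
    (integrable_mul_of_hasCompactSupport hu.continuous (continuous_pder hw j)
      (hc.imp id (·.pder j)))
    (integrable_mul_of_hasCompactSupport hu.continuous hw.continuous hc)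
    (fun x _ => hu.differentiable one_ne_zero x) (fun x _ => hw.differentiable one_ne_zero x)

theorem integral_mul_divg_eq_neg_inner_gradient {u : EuclideanSpace ℝ (Fin n) → ℝ}
    {v : EuclideanSpace ℝ (Fin n) → EuclideanSpace ℝ (Fin n)} (hu : ContDiff ℝ 1 u)
    (hv : ContDiff ℝ 1 v) (hc : HasCompactSupport u ∨ HasCompactSupport v) :
    ∫ x, u x * divg n v x = -∫ x, ⟪gradient u x, v x⟫_ℝ := by
  have hvj (j : Fin n) : ContDiff ℝ 1 (fun y => v y j) := (contDiff_piLp 2).1 hv j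
  have hcj (j : Fin n) : HasCompactSupport u ∨ HasCompactSupport (fun y => v y j) :=
    hc.imp id fun h => h.comp_left (g := fun w : EuclideanSpace ℝ (Fin n) => w j) rfl
  simp only [divg, inner_gradient_eq_sum_pder_mul, Finset.mul_sum]
  rw [integral_finsetSum _ fun j _ => integrable_mul_of_hasCompactSupport hu.continuous
      (continuous_pder (hvj j) j) ((hcj j).imp id (·.pder j)),
    integral_finsetSum _ fun j _ => integrable_mul_of_hasCompactSupport
      (continuous_pder hu j) (hvj j).continuous ((hcj j).imp (·.pder j) id),
    ← Finset.sum_neg_distrib]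
  exact Finset.sum_congr rfl fun j _ => integral_mul_pder_eq_neg hu (hvj j) (hcj j) j

theorem divg_rpow_smul_gradient {μ Φ : EuclideanSpace ℝ (Fin n) → ℝ}
    {x : EuclideanSpace ℝ (Fin n)} (hμ : DifferentiableAt ℝ μ x) (hx : μ x ≠ 0)
    (hΦ : DifferentiableAt ℝ (gradient Φ) x) (γ : ℝ) :
    divg n (fun y => μ y ^ γ • gradient Φ y) x
      = μ x * (γ * μ x ^ (γ - 2) * ⟪gradient μ x, gradient Φ x⟫_ℝ
        + μ x ^ (γ - 1) * lapl n Φ x) := by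
  have h1 : μ x ^ (γ - 1) = μ x ^ (γ - 2) * μ x := by
    rw [← Real.rpow_add_one hx]; congr 1; ring
  have h2 : μ x ^ γ = μ x ^ (γ - 1) * μ x := by
    rw [← Real.rpow_add_one hx]; congr 1; ring
  rw [divg_smul (hμ.rpow_const (Or.inl hx)) hΦ, gradient_rpow_const hμ hx, divg_gradient,
    real_inner_smul_left, h2, h1]
  ring

end EuclideanCalculus

theorem stmt10_general (n : ℕ) (γ : ℝ)
    (ρ μ : EuclideanSpace ℝ (Fin n) → ℝ)
    (hρ : ContDiff ℝ (⊤ : ℕ∞) ρ) (hμ : ContDiff ℝ (⊤ : ℕ∞) μ)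
    (hμpos : ∀ x, 0 < μ x)
    (Φ : EuclideanSpace ℝ (Fin n) → ℝ) (hΦ : ContDiff ℝ (⊤ : ℕ∞) Φ)
    (hΦc : HasCompactSupport Φ) :
    ∫ x, (γ * (μ x)^(γ-2) * ⟪gradient μ x, gradient Φ x⟫_ℝ
        + (μ x)^(γ-1) * lapl n Φ x) * ρ x
      = ∫ x, Φ x * divg n (fun y => (μ y)^γ • gradient (fun z => ρ z / μ z) y) x := by
  have hμ0 (x : EuclideanSpace ℝ (Fin n)) : μ x ≠ 0 := (hμpos x).ne'
  have hμγ : ContDiff ℝ 1 (fun y => μ y ^ γ) :=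
    (hμ.rpow_const_of_ne hμ0).of_le (WithTop.coe_le_coe.2 le_top)
  have hq : ContDiff ℝ (1 + 1) (fun z => ρ z / μ z) :=
    (hρ.div hμ hμ0).of_le (WithTop.coe_le_coe.2 le_top)
  have hΦ2 : ContDiff ℝ (1 + 1) Φ := hΦ.of_le (WithTop.coe_le_coe.2 le_top)
  have hc : HasCompactSupport ((fun y => μ y ^ γ) • gradient Φ) := hΦc.gradient.smul_left
  calc ∫ x, (γ * μ x ^ (γ - 2) * ⟪gradient μ x, gradient Φ x⟫_ℝ + μ x ^ (γ - 1) * lapl n Φ x) * ρ x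
      = ∫ x, ρ x / μ x * divg n (fun y => μ y ^ γ • gradient Φ y) x := by
        refine integral_congr_ae (Eventually.of_forall fun x => ?_)
        have := hμ0 x
        simp only [divg_rpow_smul_gradient (hμ.differentiable (by simp) x) this
          ((contDiff_gradient hΦ2).differentiable one_ne_zero x)]
        field_simp
    _ = -∫ x, ⟪gradient (fun z => ρ z / μ z) x, μ x ^ γ • gradient Φ x⟫_ℝ :=
        integral_mul_divg_eq_neg_inner_gradient hq.one_of_succ
          (hμγ.smul (contDiff_gradient hΦ2)) (Or.inr hc)
    _ = -∫ x, ⟪gradient Φ x, μ x ^ γ • gradient (fun z => ρ z / μ z) x⟫_ℝ := by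
        simp only [real_inner_smul_right, real_inner_comm (gradient Φ _)]
    _ = ∫ x, Φ x * divg n (fun y => μ y ^ γ • gradient (fun z => ρ z / μ z) y) x :=
        (integral_mul_divg_eq_neg_inner_gradient hΦ2.one_of_succ
          (hμγ.smul (contDiff_gradient hq)) (Or.inl hΦc)).symm

/-- the Kolmogorov forward operator `L*_γρ = ∇·(μ^γ∇(ρ/μ))` is the
adjoint of the generator `L_γΦ = γμ^{γ−2}⟨∇μ,∇Φ⟩ + μ^{γ−1}ΔΦ`:
`∫ (L_γΦ) ρ dx = ∫ Φ (L*_γρ) dx`. -/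
theorem stmt10 (n : ℕ) (hn : 1 ≤ n) (γ : ℝ)
    (ρ μ : EuclideanSpace ℝ (Fin n) → ℝ)
    (hρ : ContDiff ℝ (⊤ : ℕ∞) ρ) (hμ : ContDiff ℝ (⊤ : ℕ∞) μ)
    (hρpos : ∀ x, 0 < ρ x) (hμpos : ∀ x, 0 < μ x)
    (Φ : EuclideanSpace ℝ (Fin n) → ℝ) (hΦ : ContDiff ℝ (⊤ : ℕ∞) Φ)
    (hΦc : HasCompactSupport Φ) :
    ∫ x, (γ * (μ x)^(γ-2) * ⟪gradient μ x, gradient Φ x⟫_ℝ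
        + (μ x)^(γ-1) * lapl n Φ x) * ρ x
      = ∫ x, Φ x * divg n (fun y => (μ y)^γ • gradient (fun z => ρ z / μ z) y) x :=
  stmt10_general n γ ρ μ hρ hμ hμpos Φ hΦ hΦc
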